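/- arXiv:2507.05021 — 4 statements merged into one kernel-verified Lean document; each statement's English description precedes it below -/
import Mathlib

section
/- The element v₄ := j⊗j − c₁^{−1}·(ij)⊗(ij) − 2c₂c₁^{−1}·i⊗i of B ⊗_F B satisfies: (i) for every unit t of the subalgebra F + F·i of B, (t j t^{−1})⊗(t j t^{−1}) − c₁^{−1}·(t(ij)t^{−1})⊗(t(ij)t^{−1}) − 2c₂c₁^{−1}·(t i t^{−1})⊗(t i t^{−1}) = v₄; and (ii) Tr(j·conj(j)) − c₁^{−1}·Tr((ij)·conj(ij)) − 2c₂c₁^{−1}·Tr(i·conj(i)) = 0, so that v₄ is a symmetric tensor in B₀⊗B₀ lying in the kernel of the contraction Δ₄. -/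
open scoped TensorProduct Quaternion

noncomputable section

namespace PaperQuat

variable {F : Type*} [Field F] {c₁ c₂ : F}

/-- The reduced trace of a quaternion: the scalar `Tr(b)` with `b + b̄ = Tr(b)·1`. -/
def qTr (a : ℍ[F, c₁, c₂]) : F := (a + star a).re

/-- The basis quaternion `i`. -/
def qI (F : Type*) [Field F] (c₁ c₂ : F) : ℍ[F, c₁, c₂] := ⟨0, 1, 0, 0⟩

/-- The basis quaternion `j`. -/
def qJ (F : Type*) [Field F] (c₁ c₂ : F) : ℍ[F, c₁, c₂] := ⟨0, 0, 1, 0⟩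

/-- The basis quaternion `k = ij`. -/
def qK (F : Type*) [Field F] (c₁ c₂ : F) : ℍ[F, c₁, c₂] := ⟨0, 0, 0, 1⟩

/-- The trace-zero subspace `B₀ = {b ∈ B : b + b̄ = 0}`. -/
def B0 (F : Type*) [Field F] (c₁ c₂ : F) : Submodule F ℍ[F, c₁, c₂] where
  carrier := {a | a + star a = 0}
  add_mem' := by
    intro a b ha hb
    simp only [Set.mem_setOf_eq] at *
    rw [star_add, add_add_add_comm a b (star a) (star b), ha, hb,
      add_zero]
  zero_mem' := by simp
  smul_mem' := by
    intro r a ha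
    simp only [Set.mem_setOf_eq] at *
    rw [QuaternionAlgebra.star_smul, ← smul_add, ha, smul_zero]

/-- The index map omitting the `r`-th and `s`-th factors (`r < s`). -/
def omit2 {m : ℕ} (r s : Fin m) (h : r < s) (i : Fin (m - 2)) : Fin m :=
  ((Finset.univ \ {r, s}).orderIsoOfFin
    (by
      rw [Finset.card_sdiff_of_subset (Finset.subset_univ _), Finset.card_univ, Fintype.card_fin,
        Finset.card_insert_of_notMem (by simp [h.ne]), Finset.card_singleton]) i : Fin m)

/-- The submodule `Sym^m(B₀) ⊆ B₀^{⊗m}` of tensors invariant under all permutations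
of the factors. -/
def symPow (F : Type*) [Field F] (c₁ c₂ : F) (m : ℕ) :
    Submodule F (⨂[F]^m ↥(B0 F c₁ c₂)) :=
  ⨅ σ : Equiv.Perm (Fin m),
    LinearMap.ker
      ((PiTensorProduct.reindex F (fun _ : Fin m => ↥(B0 F c₁ c₂)) σ).toLinearMap - LinearMap.id)

/-- The matrix `M = [[XY, Y²], [−X², −XY]]` with entries in `L[X,Y]`. -/
def Mmat (L : Type*) [CommRing L] :
    Matrix (Fin 2) (Fin 2) (MvPolynomial (Fin 2) L) :=
  !![MvPolynomial.X 0 * MvPolynomial.X 1, MvPolynomial.X 1 * MvPolynomial.X 1;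
     -(MvPolynomial.X 0 * MvPolynomial.X 0), -(MvPolynomial.X 0 * MvPolynomial.X 1)]

/-- The `GL₂`-action `(g·P)(X,Y) = det(g)^{−k/2}·P(aX+cY, bX+dY)` on polynomials, with
`m = k/2`. -/
def glAct (L : Type*) [Field L] (m : ℕ) (g : Matrix (Fin 2) (Fin 2) L)
    (P : MvPolynomial (Fin 2) L) : MvPolynomial (Fin 2) L :=
  (g.det⁻¹) ^ m •
    (MvPolynomial.aeval fun i : Fin 2 =>
      ∑ j : Fin 2, MvPolynomial.C (g j i) * MvPolynomial.X j) P

end PaperQuat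

open PaperQuat

/-!
Conjugation by `u = a + b·i` fixes `i` and acts on the plane `F·j + F·ij` by the matrix
`[[p, c₁q], [q, p]]` with `p = (a² + c₁b²)/N`, `q = 2ab/N`, `N = a² − c₁b²`. This matrix
preserves the quadratic form `X² − c₁⁻¹Y²` since `p² − c₁q² = 1`, so the symmetric tensor
`j⊗j − c₁⁻¹·(ij)⊗(ij)` is fixed, and so is `i⊗i`.
-/

namespace QuaternionAlgebra

theorem re_mul_star_ne_zero_of_isUnit {R : Type*} [CommRing R] [Nontrivial R] {c₁ c₂ c₃ : R}
    {a : ℍ[R, c₁, c₂, c₃]} (ha : IsUnit a) : (a * star a).re ≠ 0 := by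
  intro h
  have hstar : a * star a = 0 := by rw [mul_star_eq_coe, h, coe_zero]
  rw [ha.mul_right_eq_zero, star_eq_zero] at hstar
  exact not_isUnit_zero (hstar ▸ ha)

theorem coe_inv_eq_smul_star {R : Type*} [Field R] {c₁ c₂ c₃ : R} (u : ℍ[R, c₁, c₂, c₃]ˣ) :
    (↑u⁻¹ : ℍ[R, c₁, c₂, c₃]) = (↑u * star (u : ℍ[R, c₁, c₂, c₃])).re⁻¹ • star ↑u := by
  refine u.inv_eq_of_mul_eq_one_right ?_
  rw [mul_smul_comm, mul_star_eq_coe, smul_coe, re_coe,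
    inv_mul_cancel₀ (re_mul_star_ne_zero_of_isUnit u.isUnit), coe_one]

end QuaternionAlgebra

section TensorSquare

variable {F M : Type*} [Field F] [AddCommGroup M] [Module F M]

theorem tmul_self_sub_inv_smul_tmul_self_of_sq_sub_mul_sq_eq_one {c p q : F} (hc : c ≠ 0)
    (hpq : p ^ 2 - c * q ^ 2 = 1) (x y : M) :
    (p • x + q • y) ⊗ₜ[F] (p • x + q • y)
        - c⁻¹ • (((c * q) • x + p • y) ⊗ₜ[F] ((c * q) • x + p • y)) =
      x ⊗ₜ[F] x - c⁻¹ • (y ⊗ₜ[F] y) := by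
  simp only [TensorProduct.tmul_add, TensorProduct.add_tmul, ← TensorProduct.smul_tmul',
    TensorProduct.tmul_smul]
  match_scalars
  all_goals field_simp
  · linear_combination hpq
  · ring
  · ring
  · linear_combination -hpq

end TensorSquare

namespace PaperQuat

variable {F : Type*} [Field F] {c₁ c₂ : F}

theorem algebraMap_add_smul_qI (a b : F) :
    algebraMap F ℍ[F, c₁, c₂] a + b • qI F c₁ c₂ = ⟨a, b, 0, 0⟩ := by
  ext <;> simp [qI]

theorem mk_zero_mem_B0 (x y z : F) : (⟨0, x, y, z⟩ : ℍ[F, c₁, c₂]) ∈ B0 F c₁ c₂ := by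
  change _ + star _ = 0
  ext <;> simp

theorem qTr_qI_mul_star : qTr (qI F c₁ c₂ * star (qI F c₁ c₂)) = -2 * c₁ := by
  simp [qTr, qI]; ring

theorem qTr_qJ_mul_star : qTr (qJ F c₁ c₂ * star (qJ F c₁ c₂)) = -2 * c₂ := by
  simp [qTr, qJ]; ring

theorem qTr_qK_mul_star : qTr (qK F c₁ c₂ * star (qK F c₁ c₂)) = 2 * c₁ * c₂ := by
  simp [qTr, qK]; ring

theorem v4_contraction_eq_zero (hc₁ : c₁ ≠ 0) :
    qTr (qJ F c₁ c₂ * star (qJ F c₁ c₂))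
        - c₁⁻¹ * qTr (qK F c₁ c₂ * star (qK F c₁ c₂))
        - 2 * c₂ * c₁⁻¹ * qTr (qI F c₁ c₂ * star (qI F c₁ c₂)) = 0 := by
  rw [qTr_qI_mul_star, qTr_qJ_mul_star, qTr_qK_mul_star]
  field_simp
  ring

section Conjugation

variable {a b : F} {u : ℍ[F, c₁, c₂]ˣ}

theorem re_mk_mul_star (a b : F) :
    ((⟨a, b, 0, 0⟩ : ℍ[F, c₁, c₂]) * star ⟨a, b, 0, 0⟩).re = a ^ 2 - c₁ * b ^ 2 := by
  simp; ring

theorem sq_sub_mul_sq_ne_zero_of_coe_eq (hu : (u : ℍ[F, c₁, c₂]) = ⟨a, b, 0, 0⟩) :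
    a ^ 2 - c₁ * b ^ 2 ≠ 0 := by
  have h := QuaternionAlgebra.re_mul_star_ne_zero_of_isUnit u.isUnit
  rwa [hu, re_mk_mul_star] at h

theorem conj_qI_of_coe_eq (hu : (u : ℍ[F, c₁, c₂]) = ⟨a, b, 0, 0⟩) :
    ↑u * qI F c₁ c₂ * ↑u⁻¹ = qI F c₁ c₂ := by
  have hN := sq_sub_mul_sq_ne_zero_of_coe_eq hu
  rw [QuaternionAlgebra.coe_inv_eq_smul_star, hu, re_mk_mul_star]
  ext <;> simp [qI] <;> field_simp <;> ring

theorem conj_qJ_of_coe_eq (hu : (u : ℍ[F, c₁, c₂]) = ⟨a, b, 0, 0⟩) :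
    ↑u * qJ F c₁ c₂ * ↑u⁻¹ =
      ((a ^ 2 + c₁ * b ^ 2) / (a ^ 2 - c₁ * b ^ 2)) • qJ F c₁ c₂
        + (2 * a * b / (a ^ 2 - c₁ * b ^ 2)) • qK F c₁ c₂ := by
  rw [QuaternionAlgebra.coe_inv_eq_smul_star, hu, re_mk_mul_star]
  ext <;> simp [qJ, qK] <;> ring

theorem conj_qK_of_coe_eq (hu : (u : ℍ[F, c₁, c₂]) = ⟨a, b, 0, 0⟩) :
    ↑u * qK F c₁ c₂ * ↑u⁻¹ =
      (c₁ * (2 * a * b / (a ^ 2 - c₁ * b ^ 2))) • qJ F c₁ c₂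
        + ((a ^ 2 + c₁ * b ^ 2) / (a ^ 2 - c₁ * b ^ 2)) • qK F c₁ c₂ := by
  rw [QuaternionAlgebra.coe_inv_eq_smul_star, hu, re_mk_mul_star]
  ext <;> simp [qJ, qK] <;> ring

theorem v4_conj_eq_of_coe_eq (hc₁ : c₁ ≠ 0) (hu : (u : ℍ[F, c₁, c₂]) = ⟨a, b, 0, 0⟩) :
    ((↑u * qJ F c₁ c₂ * ↑u⁻¹) ⊗ₜ[F] (↑u * qJ F c₁ c₂ * ↑u⁻¹)
        - c₁⁻¹ • ((↑u * qK F c₁ c₂ * ↑u⁻¹) ⊗ₜ[F] (↑u * qK F c₁ c₂ * ↑u⁻¹))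
        - (2 * c₂ * c₁⁻¹) • ((↑u * qI F c₁ c₂ * ↑u⁻¹) ⊗ₜ[F] (↑u * qI F c₁ c₂ * ↑u⁻¹)) :
          ℍ[F, c₁, c₂] ⊗[F] ℍ[F, c₁, c₂]) =
      qJ F c₁ c₂ ⊗ₜ[F] qJ F c₁ c₂
        - c₁⁻¹ • (qK F c₁ c₂ ⊗ₜ[F] qK F c₁ c₂)
        - (2 * c₂ * c₁⁻¹) • (qI F c₁ c₂ ⊗ₜ[F] qI F c₁ c₂) := by
  have hN := sq_sub_mul_sq_ne_zero_of_coe_eq hu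
  rw [conj_qJ_of_coe_eq hu, conj_qK_of_coe_eq hu, conj_qI_of_coe_eq hu,
    tmul_self_sub_inv_smul_tmul_self_of_sq_sub_mul_sq_eq_one hc₁]
  field_simp
  ring

end Conjugation

end PaperQuat

theorem v4_invariant_harmonic_general
    (F : Type*) [Field F] (c₁ c₂ : F) (hc₁ : c₁ ≠ 0) :
    -- (i) invariance under conjugation by units of `F + F·i`
    (∀ u : ℍ[F, c₁, c₂]ˣ,
      (∃ a b : F, (u : ℍ[F, c₁, c₂]) = algebraMap F ℍ[F, c₁, c₂] a + b • qI F c₁ c₂) →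
      ((↑u * qJ F c₁ c₂ * ↑u⁻¹) ⊗ₜ[F] (↑u * qJ F c₁ c₂ * ↑u⁻¹)
          - c₁⁻¹ • ((↑u * qK F c₁ c₂ * ↑u⁻¹) ⊗ₜ[F] (↑u * qK F c₁ c₂ * ↑u⁻¹))
          - (2 * c₂ * c₁⁻¹) • ((↑u * qI F c₁ c₂ * ↑u⁻¹) ⊗ₜ[F] (↑u * qI F c₁ c₂ * ↑u⁻¹)) :
            ℍ[F, c₁, c₂] ⊗[F] ℍ[F, c₁, c₂]) =
        qJ F c₁ c₂ ⊗ₜ[F] qJ F c₁ c₂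
          - c₁⁻¹ • (qK F c₁ c₂ ⊗ₜ[F] qK F c₁ c₂)
          - (2 * c₂ * c₁⁻¹) • (qI F c₁ c₂ ⊗ₜ[F] qI F c₁ c₂)) ∧
    -- (ii) the trace contraction vanishes
    (qTr (qJ F c₁ c₂ * star (qJ F c₁ c₂))
        - c₁⁻¹ * qTr (qK F c₁ c₂ * star (qK F c₁ c₂))
        - 2 * c₂ * c₁⁻¹ * qTr (qI F c₁ c₂ * star (qI F c₁ c₂)) = 0) ∧
    -- the factors of v₄ are trace-zero quaternions
    (qI F c₁ c₂ ∈ B0 F c₁ c₂ ∧ qJ F c₁ c₂ ∈ B0 F c₁ c₂ ∧ qK F c₁ c₂ ∈ B0 F c₁ c₂) ∧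
    -- v₄ is a symmetric tensor
    ((TensorProduct.comm F ℍ[F, c₁, c₂] ℍ[F, c₁, c₂])
        (qJ F c₁ c₂ ⊗ₜ[F] qJ F c₁ c₂
          - c₁⁻¹ • (qK F c₁ c₂ ⊗ₜ[F] qK F c₁ c₂)
          - (2 * c₂ * c₁⁻¹) • (qI F c₁ c₂ ⊗ₜ[F] qI F c₁ c₂)) =
      qJ F c₁ c₂ ⊗ₜ[F] qJ F c₁ c₂
        - c₁⁻¹ • (qK F c₁ c₂ ⊗ₜ[F] qK F c₁ c₂)
        - (2 * c₂ * c₁⁻¹) • (qI F c₁ c₂ ⊗ₜ[F] qI F c₁ c₂)) ∧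
    -- v₄ lies in the kernel of the contraction Δ₄, `b₁⊗b₂ ↦ Tr(b₁·conj(b₂))`
    (∀ D : ℍ[F, c₁, c₂] ⊗[F] ℍ[F, c₁, c₂] →ₗ[F] F,
      (∀ a b : ℍ[F, c₁, c₂], D (a ⊗ₜ[F] b) = qTr (a * star b)) →
      D (qJ F c₁ c₂ ⊗ₜ[F] qJ F c₁ c₂
          - c₁⁻¹ • (qK F c₁ c₂ ⊗ₜ[F] qK F c₁ c₂)
          - (2 * c₂ * c₁⁻¹) • (qI F c₁ c₂ ⊗ₜ[F] qI F c₁ c₂)) = 0) := by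
  refine ⟨?_, v4_contraction_eq_zero hc₁,
    ⟨mk_zero_mem_B0 1 0 0, mk_zero_mem_B0 0 1 0, mk_zero_mem_B0 0 0 1⟩, ?_, ?_⟩
  · rintro u ⟨a, b, hab⟩
    exact v4_conj_eq_of_coe_eq hc₁ (hab.trans (algebraMap_add_smul_qI a b))
  · simp only [map_sub, map_smul, TensorProduct.comm_tmul]
  · intro D hD
    rw [map_sub, map_sub, map_smul, map_smul, hD, hD, hD, smul_eq_mul, smul_eq_mul]
    exact v4_contraction_eq_zero hc₁

/-- The explicit `E^×`-invariant harmonic tensor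
`v₄ = j⊗j − c₁⁻¹·(ij)⊗(ij) − 2c₂c₁⁻¹·i⊗i` of the proof of Lemma 2.5: it is invariant under
the diagonal conjugation action of every unit of `F + F·i`, its contraction vanishes, it is a
symmetric tensor, and its factors lie in `B₀`. -/
theorem v4_invariant_harmonic
    (F : Type*) [Field F] [NumberField F] (c₁ c₂ : F) (hc₁ : c₁ ≠ 0) (hc₂ : c₂ ≠ 0) :
    -- (i) invariance under conjugation by units of `F + F·i`
    (∀ u : ℍ[F, c₁, c₂]ˣ,
      (∃ a b : F, (u : ℍ[F, c₁, c₂]) = algebraMap F ℍ[F, c₁, c₂] a + b • qI F c₁ c₂) →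
      ((↑u * qJ F c₁ c₂ * ↑u⁻¹) ⊗ₜ[F] (↑u * qJ F c₁ c₂ * ↑u⁻¹)
          - c₁⁻¹ • ((↑u * qK F c₁ c₂ * ↑u⁻¹) ⊗ₜ[F] (↑u * qK F c₁ c₂ * ↑u⁻¹))
          - (2 * c₂ * c₁⁻¹) • ((↑u * qI F c₁ c₂ * ↑u⁻¹) ⊗ₜ[F] (↑u * qI F c₁ c₂ * ↑u⁻¹)) :
            ℍ[F, c₁, c₂] ⊗[F] ℍ[F, c₁, c₂]) =
        qJ F c₁ c₂ ⊗ₜ[F] qJ F c₁ c₂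
          - c₁⁻¹ • (qK F c₁ c₂ ⊗ₜ[F] qK F c₁ c₂)
          - (2 * c₂ * c₁⁻¹) • (qI F c₁ c₂ ⊗ₜ[F] qI F c₁ c₂)) ∧
    -- (ii) the trace contraction vanishes
    (qTr (qJ F c₁ c₂ * star (qJ F c₁ c₂))
        - c₁⁻¹ * qTr (qK F c₁ c₂ * star (qK F c₁ c₂))
        - 2 * c₂ * c₁⁻¹ * qTr (qI F c₁ c₂ * star (qI F c₁ c₂)) = 0) ∧
    -- the factors of v₄ are trace-zero quaternions
    (qI F c₁ c₂ ∈ B0 F c₁ c₂ ∧ qJ F c₁ c₂ ∈ B0 F c₁ c₂ ∧ qK F c₁ c₂ ∈ B0 F c₁ c₂) ∧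
    -- v₄ is a symmetric tensor
    ((TensorProduct.comm F ℍ[F, c₁, c₂] ℍ[F, c₁, c₂])
        (qJ F c₁ c₂ ⊗ₜ[F] qJ F c₁ c₂
          - c₁⁻¹ • (qK F c₁ c₂ ⊗ₜ[F] qK F c₁ c₂)
          - (2 * c₂ * c₁⁻¹) • (qI F c₁ c₂ ⊗ₜ[F] qI F c₁ c₂)) =
      qJ F c₁ c₂ ⊗ₜ[F] qJ F c₁ c₂
        - c₁⁻¹ • (qK F c₁ c₂ ⊗ₜ[F] qK F c₁ c₂)
        - (2 * c₂ * c₁⁻¹) • (qI F c₁ c₂ ⊗ₜ[F] qI F c₁ c₂)) ∧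
    -- v₄ lies in the kernel of the contraction Δ₄, `b₁⊗b₂ ↦ Tr(b₁·conj(b₂))`
    (∀ D : ℍ[F, c₁, c₂] ⊗[F] ℍ[F, c₁, c₂] →ₗ[F] F,
      (∀ a b : ℍ[F, c₁, c₂], D (a ⊗ₜ[F] b) = qTr (a * star b)) →
      D (qJ F c₁ c₂ ⊗ₜ[F] qJ F c₁ c₂
          - c₁⁻¹ • (qK F c₁ c₂ ⊗ₜ[F] qK F c₁ c₂)
          - (2 * c₂ * c₁⁻¹) • (qI F c₁ c₂ ⊗ₜ[F] qI F c₁ c₂)) = 0) :=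
  v4_invariant_harmonic_general F c₁ c₂ hc₁
end
end

section
/- Let p be a prime, ψ : ℚ_p → ℂ^× a continuous homomorphism from the additive group of ℚ_p that is trivial on ℤ_p but nontrivial on p^{−1}ℤ_p, and ρ : ℚ_p^× → ℂ^× a continuous homomorphism whose restriction to ℤ_p^× has conductor p^m with m ≥ 1. Let μ^× be a Haar measure on the locally compact group ℚ_p^×, and let φ : ℚ_p^× → ℂ be a function vanishing outside ℤ_p ∖ {0}, invariant under multiplication by units (φ(uy) = φ(y) for all u ∈ ℤ_p^×), and such that t ↦ ρ(t)·ψ(p^{−m}t)·φ(t) is μ^×-integrable. Then ∫_{ℚ_p^×} ρ(t)·ψ(p^{−m}t)·φ(t) dμ^×(t) = φ(1) · ∫_{ℤ_p^×} ρ(t)·ψ(p^{−m}t) dμ^×(t). -/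
/-!
Pick a unit `v ≡ 1 mod p^(m-1)` with `ρ v ≠ 1` (this is what conductor `p^m` with `m ≥ 1`
provides). For `|t| < 1` the difference `p^(-m) v t - p^(-m) t = p^(-m) t (v - 1)` lies in `ℤ_p`,
so `ψ` does not see it, and `φ` is unit-invariant; hence on the ball `|t| < 1` the integrand is
multiplied by `ρ v ≠ 1` under the measure-preserving translation `t ↦ v t`, and its integral
there vanishes. Outside `|t| ≤ 1` the function `φ` vanishes, and on the unit shell `φ = φ 1`.
-/

open MeasureTheory

section TranslationEigenfunction

variable {G E 𝕜 : Type*} [MeasurableSpace G] [Group G] [MeasurableMul G] {μ : Measure G}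
  [μ.IsMulLeftInvariant] [NontriviallyNormedField 𝕜] [NormedAddCommGroup E] [NormedSpace ℝ E]
  [NormedSpace 𝕜 E] [SMulCommClass ℝ 𝕜 E] {f : G → E} {g : G} {c : 𝕜}

theorem integral_eq_zero_of_mul_left_eq_smul (hc : c ≠ 1) (hf : ∀ x, f (g * x) = c • f x) :
    ∫ x, f x ∂μ = 0 := by
  have hfix : c • ∫ x, f x ∂μ = ∫ x, f x ∂μ := by
    rw [← integral_smul, ← integral_mul_left_eq_self f g]
    simp only [hf]
  have hsmul : (c - 1) • ∫ x, f x ∂μ = 0 := by rw [sub_smul, one_smul, hfix, sub_self]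
  exact (smul_eq_zero.mp hsmul).resolve_left (sub_ne_zero.mpr hc)

theorem setIntegral_eq_zero_of_mul_left_eq_smul {s : Set G} (hs : MeasurableSet s)
    (hgs : ∀ x, g * x ∈ s ↔ x ∈ s) (hc : c ≠ 1) (hf : ∀ x ∈ s, f (g * x) = c • f x) :
    ∫ x in s, f x ∂μ = 0 := by
  rw [← integral_indicator hs]
  refine integral_eq_zero_of_mul_left_eq_smul (g := g) hc fun x => ?_
  by_cases hx : x ∈ s
  · rw [Set.indicator_of_mem ((hgs x).mpr hx), Set.indicator_of_mem hx, hf x hx]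
  · rw [Set.indicator_of_notMem (mt (hgs x).mp hx), Set.indicator_of_notMem hx, smul_zero]

end TranslationEigenfunction

namespace Padic

variable {p : ℕ} [Fact p.Prime]

theorem norm_sub_one_le_one {x : ℚ_[p]} (hx : ‖x‖ = 1) : ‖x - 1‖ ≤ 1 := by
  simpa [hx, sub_eq_add_neg] using IsUltrametricDist.norm_add_le_max x (-1)

theorem norm_eq_one_of_norm_sub_one_lt_one {x : ℚ_[p]} (hx : ‖x - 1‖ < 1) : ‖x‖ = 1 := by
  simpa using norm_eq_of_norm_sub_lt_right (z2 := 1) (by simpa using hx)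

theorem norm_zpow_mul_mul_sub_one_le_one {m : ℤ} {t v : ℚ_[p]} (ht : ‖t‖ < 1)
    (hv : ‖v - 1‖ ≤ (p : ℝ) ^ (-(m - 1))) : ‖(p : ℚ_[p]) ^ (-m) * t * (v - 1)‖ ≤ 1 := by
  have hp : (0 : ℝ) < p := by exact_mod_cast (Fact.out : p.Prime).pos
  have ht' : ‖t‖ ≤ (p : ℝ) ^ (-1 : ℤ) := by
    rw [norm_le_pow_iff_norm_lt_pow_add_one]
    simpa using ht
  calc ‖(p : ℚ_[p]) ^ (-m) * t * (v - 1)‖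
      = (p : ℝ) ^ m * ‖t‖ * ‖v - 1‖ := by rw [norm_mul, norm_mul, norm_p_zpow, neg_neg]
    _ ≤ (p : ℝ) ^ m * (p : ℝ) ^ (-1 : ℤ) * (p : ℝ) ^ (-(m - 1)) := by gcongr
    _ = 1 := by rw [← zpow_add₀ hp.ne', ← zpow_add₀ hp.ne', ← zpow_zero (p : ℝ)]; ring_nf

theorem map_zpow_mul_mul_eq_of_norm_lt_one {M : Type*} [Monoid M] (ψ : ℚ_[p] → M)
    (hψ_add : ∀ x y : ℚ_[p], ψ (x + y) = ψ x * ψ y) (hψ_triv : ∀ x : ℤ_[p], ψ (x : ℚ_[p]) = 1)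
    {m : ℤ} {t v : ℚ_[p]} (ht : ‖t‖ < 1) (hv : ‖v - 1‖ ≤ (p : ℝ) ^ (-(m - 1))) :
    ψ ((p : ℚ_[p]) ^ (-m) * (v * t)) = ψ ((p : ℚ_[p]) ^ (-m) * t) := by
  rw [show (p : ℚ_[p]) ^ (-m) * (v * t) = (p : ℚ_[p]) ^ (-m) * t + (p : ℚ_[p]) ^ (-m) * t * (v - 1)
      by ring, hψ_add, hψ_triv ⟨_, norm_zpow_mul_mul_sub_one_le_one ht hv⟩, mul_one]

theorem exists_unit_near_one_ne_one {M : Type*} [One M] {ρ : ℚ_[p]ˣ → M} {m : ℕ} (hm : 1 ≤ m)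
    (hρ_nontriv : ∃ u : ℚ_[p]ˣ, ‖(u : ℚ_[p])‖ = 1 ∧ ρ u ≠ 1)
    (hρ_min : 2 ≤ m → ∃ u : ℚ_[p]ˣ,
      ‖(u : ℚ_[p]) - 1‖ ≤ (p : ℝ) ^ (-((m : ℤ) - 1)) ∧ ρ u ≠ 1) :
    ∃ v : ℚ_[p]ˣ, ‖(v : ℚ_[p])‖ = 1 ∧
      ‖(v : ℚ_[p]) - 1‖ ≤ (p : ℝ) ^ (-((m : ℤ) - 1)) ∧ ρ v ≠ 1 := by
  obtain rfl | hm2 := hm.eq_or_lt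
  · obtain ⟨u, hu, hρu⟩ := hρ_nontriv
    exact ⟨u, hu, by simpa using norm_sub_one_le_one hu, hρu⟩
  · obtain ⟨u, hu, hρu⟩ := hρ_min hm2
    have hp : (1 : ℝ) < p := by exact_mod_cast (Fact.out : p.Prime).one_lt
    have hlt : ‖(u : ℚ_[p]) - 1‖ < 1 := hu.trans_lt (zpow_lt_one_of_neg₀ hp (by omega))
    exact ⟨u, norm_eq_one_of_norm_sub_one_lt_one hlt, hu, hρu⟩

end Padic

theorem zeta_integral_ramified_twist_general (p : ℕ) [Fact p.Prime]
    [MeasurableSpace ℚ_[p]ˣ] [BorelSpace ℚ_[p]ˣ]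
    (μ : Measure ℚ_[p]ˣ) [μ.IsHaarMeasure]
    -- ψ : an additive character of ℚ_p, trivial on ℤ_p, nontrivial on p⁻¹ℤ_p
    (ψ : ℚ_[p] → ℂ)
    (hψ_add : ∀ x y : ℚ_[p], ψ (x + y) = ψ x * ψ y)
    (hψ_triv : ∀ x : ℤ_[p], ψ (x : ℚ_[p]) = 1)
    -- ρ : a character of ℚ_p^× whose restriction to ℤ_p^× has conductor p^m, m ≥ 1
    (ρ : ℚ_[p]ˣ → ℂ)
    (hρ_mul : ∀ x y : ℚ_[p]ˣ, ρ (x * y) = ρ x * ρ y)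
    (m : ℕ) (hm : 1 ≤ m)
    (hρ_nontriv : ∃ u : ℚ_[p]ˣ, ‖(u : ℚ_[p])‖ = 1 ∧ ρ u ≠ 1)
    (hρ_min : 2 ≤ m → ∃ u : ℚ_[p]ˣ,
      ‖(u : ℚ_[p]) - 1‖ ≤ (p : ℝ) ^ (-((m : ℤ) - 1)) ∧ ρ u ≠ 1)
    -- φ : supported on ℤ_p ∖ {0}, invariant under multiplication by units
    (φ : ℚ_[p]ˣ → ℂ)
    (hφ_supp : ∀ t : ℚ_[p]ˣ, ¬ ‖(t : ℚ_[p])‖ ≤ 1 → φ t = 0)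
    (hφ_inv : ∀ u t : ℚ_[p]ˣ, ‖(u : ℚ_[p])‖ = 1 → φ (u * t) = φ t)
    (hint : Integrable
      (fun t : ℚ_[p]ˣ => ρ t * ψ ((p : ℚ_[p]) ^ (-(m : ℤ)) * (t : ℚ_[p])) * φ t) μ) :
    ∫ t : ℚ_[p]ˣ, ρ t * ψ ((p : ℚ_[p]) ^ (-(m : ℤ)) * (t : ℚ_[p])) * φ t ∂μ =
      φ 1 * ∫ t in {t : ℚ_[p]ˣ | ‖(t : ℚ_[p])‖ = 1},
        ρ t * ψ ((p : ℚ_[p]) ^ (-(m : ℤ)) * (t : ℚ_[p])) ∂μ := by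
  set f : ℚ_[p]ˣ → ℂ := fun t => ρ t * ψ ((p : ℚ_[p]) ^ (-(m : ℤ)) * (t : ℚ_[p])) * φ t
  set S : Set ℚ_[p]ˣ := {t | ‖(t : ℚ_[p])‖ = 1}
  set B : Set ℚ_[p]ˣ := {t | ‖(t : ℚ_[p])‖ < 1}
  have hnorm : Measurable fun t : ℚ_[p]ˣ => ‖(t : ℚ_[p])‖ :=
    (continuous_norm.comp Units.continuous_val).measurable
  have hS : MeasurableSet S := hnorm (measurableSet_singleton 1)
  have hB : MeasurableSet B := hnorm measurableSet_Iio
  have hf_split : f = S.indicator f + B.indicator f := by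
    funext t
    rcases lt_trichotomy ‖(t : ℚ_[p])‖ 1 with h | h | h
    · simp [S, B, h, h.ne]
    · simp [S, B, h]
    · simp [S, B, h.ne', h.not_gt, f, hφ_supp t h.not_ge]
  obtain ⟨v, hv_norm, hv_near, hρv⟩ := Padic.exists_unit_near_one_ne_one hm hρ_nontriv hρ_min
  have hB_zero : ∫ t in B, f t ∂μ = 0 := by
    refine setIntegral_eq_zero_of_mul_left_eq_smul (g := v) hB (fun t => by simp [B, hv_norm]) hρv
      fun t ht => ?_
    simp only [f, smul_eq_mul, hρ_mul, Units.val_mul,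
      Padic.map_zpow_mul_mul_eq_of_norm_lt_one ψ hψ_add hψ_triv ht hv_near, hφ_inv v t hv_norm]
    ring
  have hφ_shell : ∀ t ∈ S, φ t = φ 1 := fun t ht => by simpa using hφ_inv t 1 ht
  calc ∫ t, f t ∂μ = (∫ t in S, f t ∂μ) + ∫ t in B, f t ∂μ := by
        rw [← integral_indicator hS, ← integral_indicator hB, ← integral_add
          (hint.indicator hS) (hint.indicator hB)]
        exact congrArg (fun F => ∫ t, F t ∂μ) hf_split
    _ = φ 1 * ∫ t in S, ρ t * ψ ((p : ℚ_[p]) ^ (-(m : ℤ)) * (t : ℚ_[p])) ∂μ := by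
        rw [hB_zero, add_zero, ← integral_const_mul]
        refine setIntegral_congr_fun hS fun t ht => ?_
        simp only [f, hφ_shell t ht]
        ring

/-- Reduction of a ramified-twist local zeta integral to its unit-shell term: if `ρ` has ramified
restriction to `ℤ_p^×` of conductor `p^m`, and `φ` is supported on `ℤ_p ∖ {0}` and invariant
under multiplication by units, then
`∫_{ℚ_p^×} ρ(t) ψ(p^{-m} t) φ(t) dμ^× = φ(1) ∫_{ℤ_p^×} ρ(t) ψ(p^{-m} t) dμ^×`. -/
theorem zeta_integral_ramified_twist (p : ℕ) [Fact p.Prime]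
    [MeasurableSpace ℚ_[p]ˣ] [BorelSpace ℚ_[p]ˣ]
    (μ : Measure ℚ_[p]ˣ) [μ.IsHaarMeasure]
    -- ψ : an additive character of ℚ_p, trivial on ℤ_p, nontrivial on p⁻¹ℤ_p
    (ψ : ℚ_[p] → ℂ) (hψ_cont : Continuous ψ)
    (hψ_add : ∀ x y : ℚ_[p], ψ (x + y) = ψ x * ψ y)
    (hψ_triv : ∀ x : ℤ_[p], ψ (x : ℚ_[p]) = 1)
    (hψ_nontriv : ∃ x : ℚ_[p], ‖x‖ ≤ (p : ℝ) ∧ ψ x ≠ 1)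
    -- ρ : a character of ℚ_p^× whose restriction to ℤ_p^× has conductor p^m, m ≥ 1
    (ρ : ℚ_[p]ˣ → ℂ) (hρ_cont : Continuous ρ)
    (hρ_mul : ∀ x y : ℚ_[p]ˣ, ρ (x * y) = ρ x * ρ y)
    (hρ_ne : ∀ x : ℚ_[p]ˣ, ρ x ≠ 0)
    (m : ℕ) (hm : 1 ≤ m)
    (hρ_triv : ∀ u : ℚ_[p]ˣ, ‖(u : ℚ_[p]) - 1‖ ≤ (p : ℝ) ^ (-(m : ℤ)) → ρ u = 1)
    (hρ_nontriv : ∃ u : ℚ_[p]ˣ, ‖(u : ℚ_[p])‖ = 1 ∧ ρ u ≠ 1)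
    (hρ_min : 2 ≤ m → ∃ u : ℚ_[p]ˣ,
      ‖(u : ℚ_[p]) - 1‖ ≤ (p : ℝ) ^ (-((m : ℤ) - 1)) ∧ ρ u ≠ 1)
    -- φ : supported on ℤ_p ∖ {0}, invariant under multiplication by units
    (φ : ℚ_[p]ˣ → ℂ)
    (hφ_supp : ∀ t : ℚ_[p]ˣ, ¬ ‖(t : ℚ_[p])‖ ≤ 1 → φ t = 0)
    (hφ_inv : ∀ u t : ℚ_[p]ˣ, ‖(u : ℚ_[p])‖ = 1 → φ (u * t) = φ t)
    (hint : Integrable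
      (fun t : ℚ_[p]ˣ => ρ t * ψ ((p : ℚ_[p]) ^ (-(m : ℤ)) * (t : ℚ_[p])) * φ t) μ) :
    ∫ t : ℚ_[p]ˣ, ρ t * ψ ((p : ℚ_[p]) ^ (-(m : ℤ)) * (t : ℚ_[p])) * φ t ∂μ =
      φ 1 * ∫ t in {t : ℚ_[p]ˣ | ‖(t : ℚ_[p])‖ = 1},
        ρ t * ψ ((p : ℚ_[p]) ^ (-(m : ℤ)) * (t : ℚ_[p])) ∂μ :=
  zeta_integral_ramified_twist_general p μ ψ hψ_add hψ_triv ρ hρ_mul m hm hρ_nontriv hρ_min φ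
    hφ_supp hφ_inv hint
end

section
/- Let p be a prime, ρ : ℚ_p^× → ℂ^× a continuous homomorphism trivial on ℤ_p^×, and ξ ∈ ℂ^× such that both |ρ(p)·ξ·p^{−1/2}| < 1 and |ρ(p)·ξ^{−1}·p^{−1/2}| < 1. Define φ⁰ : ℚ_p^× → ℂ by φ⁰(y) := p^{−n/2} · Σ_{k=0}^{n} ξ^{2k−n} if y ∈ ℤ_p ∖ {0} with p-adic valuation v_p(y) = n, and φ⁰(y) := 0 if y ∉ ℤ_p. Let μ^× be a Haar measure on the locally compact group ℚ_p^×. Then t ↦ ρ(t)·φ⁰(t) is μ^×-integrable and (1/μ^×(ℤ_p^×)) · ∫_{ℚ_p^×} ρ(t)·φ⁰(t) dμ^×(t) = (1 − ρ(p)·ξ·p^{−1/2})^{−1} · (1 − ρ(p)·ξ^{−1}·p^{−1/2})^{−1}. -/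
/-!
The units `t` of `ℚ_[p]` with `‖t‖ ≤ 1` form the disjoint union of the shells `p ^ n ℤ_[p]ˣ`,
`n ≥ 0`, which all have Haar measure `μ ℤ_[p]ˣ` by translation invariance. On the `n`-th shell
`ρ φ⁰` is the constant `ρ(p)ⁿ p^(-n/2) ∑_{k ≤ n} ξ^(2k-n) = ∑_{k ≤ n} x^k y^(n-k)`, where
`x = ρ(p) ξ p^(-1/2)` and `y = ρ(p) ξ⁻¹ p^(-1/2)`. So the normalised integral is the Cauchy product
of the geometric series `∑ xⁿ = (1 - x)⁻¹` and `∑ yⁿ = (1 - y)⁻¹`.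
-/

open MeasureTheory Set Function

section StepFunction

variable {α E : Type*} [MeasurableSpace α] {μ : Measure α} [NormedAddCommGroup E]
  {s : ℕ → Set α} {c : ℕ → E} {f : α → E}

theorem integrable_of_eqOn_iUnion (hs : ∀ n, MeasurableSet (s n)) (hμs : ∀ n, μ (s n) ≠ ⊤)
    (hf : ∀ n, EqOn f (fun _ ↦ c n) (s n)) (hf_zero : ∀ x ∉ ⋃ n, s n, f x = 0)
    (hc : Summable fun n ↦ μ.real (s n) * ‖c n‖) : Integrable f μ := by
  have hfs (n : ℕ) : IntegrableOn f (s n) μ :=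
    (integrableOn_const (hμs n)).congr_fun (fun x hx ↦ (hf n hx).symm) (hs n)
  have hnorm (n : ℕ) : ∫ x in s n, ‖f x‖ ∂μ = μ.real (s n) * ‖c n‖ := by
    rw [setIntegral_congr_fun (hs n) fun x hx ↦ congrArg norm (hf n hx), setIntegral_const,
      smul_eq_mul]
  rw [← integrableOn_iff_integrable_of_support_subset (s := ⋃ n, s n)
    fun x hx ↦ not_imp_comm.1 (hf_zero x) hx]
  exact integrableOn_iUnion_of_summable_integral_norm hfs (by simpa only [hnorm] using hc)

theorem integral_eq_tsum_of_eqOn_iUnion [NormedSpace ℝ E] [CompleteSpace E]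
    (hs : ∀ n, MeasurableSet (s n)) (hd : Pairwise (Disjoint on s)) (hμs : ∀ n, μ (s n) ≠ ⊤)
    (hf : ∀ n, EqOn f (fun _ ↦ c n) (s n)) (hf_zero : ∀ x ∉ ⋃ n, s n, f x = 0)
    (hc : Summable fun n ↦ μ.real (s n) * ‖c n‖) :
    ∫ x, f x ∂μ = ∑' n, μ.real (s n) • c n := by
  rw [← setIntegral_eq_integral_of_forall_compl_eq_zero hf_zero,
    integral_iUnion hs hd (integrable_of_eqOn_iUnion hs hμs hf hf_zero hc).integrableOn]
  congr 1 with n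
  rw [setIntegral_congr_fun (hs n) (hf n), setIntegral_const]

end StepFunction

section GeometricSeries

open Finset

theorem sum_range_mul_pow_mul_inv_pow {K : Type*} [Field K] (c : K) {ξ : K} (hξ : ξ ≠ 0) (n : ℕ) :
    ∑ k ∈ range (n + 1), (c * ξ) ^ k * (c * ξ⁻¹) ^ (n - k) =
      c ^ n * ∑ k ∈ range (n + 1), ξ ^ (2 * (k : ℤ) - n) := by
  rw [mul_sum]
  refine sum_congr rfl fun k hk ↦ ?_
  have hkn : k ≤ n := Nat.lt_succ_iff.1 (mem_range.1 hk)
  rw [mul_pow, mul_pow, mul_mul_mul_comm, ← pow_add, Nat.add_sub_cancel' hkn, inv_pow,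
    ← zpow_natCast ξ k, ← zpow_natCast ξ (n - k), ← zpow_neg, ← zpow_add₀ hξ]
  congr 2
  push_cast [hkn]
  ring

theorem tsum_sum_range_pow_mul_pow {K : Type*} [NormedField K] [CompleteSpace K] {x y : K}
    (hx : ‖x‖ < 1) (hy : ‖y‖ < 1) :
    ∑' n, ∑ k ∈ range (n + 1), x ^ k * y ^ (n - k) = (1 - x)⁻¹ * (1 - y)⁻¹ := by
  rw [← tsum_mul_tsum_eq_tsum_sum_range_of_summable_norm
    (summable_norm_geometric_of_norm_lt_one hx) (summable_norm_geometric_of_norm_lt_one hy),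
    tsum_geometric_of_norm_lt_one hx, tsum_geometric_of_norm_lt_one hy]

end GeometricSeries

namespace Padic

variable {p : ℕ} [Fact p.Prime]

variable (p) in
def unitsShell (n : ℕ) : Set ℚ_[p]ˣ := {t | ‖(t : ℚ_[p])‖ = (p : ℝ) ^ (-(n : ℤ))}

theorem unitsShell_zero : unitsShell p 0 = {t : ℚ_[p]ˣ | ‖(t : ℚ_[p])‖ = 1} := by
  simp [unitsShell]

theorem natCast_zpow_neg_ne_zero (n : ℕ) : (p : ℝ) ^ (-(n : ℤ)) ≠ 0 :=
  zpow_ne_zero _ (Nat.cast_ne_zero.2 (Fact.out : p.Prime).ne_zero)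

theorem unitsShell_eq_preimage_sphere (n : ℕ) :
    unitsShell p n = Units.val ⁻¹' Metric.sphere 0 ((p : ℝ) ^ (-(n : ℤ))) := by
  ext t
  simp [unitsShell]

theorem isOpen_unitsShell (n : ℕ) : IsOpen (unitsShell p n) := by
  rw [unitsShell_eq_preimage_sphere]
  exact (IsUltrametricDist.isOpen_sphere _ (natCast_zpow_neg_ne_zero n)).preimage
    Units.continuous_val

theorem isCompact_unitsShell (n : ℕ) : IsCompact (unitsShell p n) := by
  rw [unitsShell_eq_preimage_sphere]
  exact Units.isEmbedding_val₀.isInducing.isCompact_preimage' (isCompact_sphere _ _)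
    fun z hz ↦ ⟨Units.mk0 z (Metric.ne_of_mem_sphere hz (natCast_zpow_neg_ne_zero n)), rfl⟩

theorem pairwise_disjoint_unitsShell : Pairwise (Disjoint on unitsShell p) := by
  intro m n hmn
  refine Set.disjoint_left.2 fun t hm hn ↦ hmn ?_
  have hp : (1 : ℝ) < p := by exact_mod_cast (Fact.out : p.Prime).one_lt
  have := zpow_right_injective₀ (zero_lt_one.trans hp) hp.ne' (hm.symm.trans hn)
  omega

theorem iUnion_unitsShell : ⋃ n, unitsShell p n = {t : ℚ_[p]ˣ | ‖(t : ℚ_[p])‖ ≤ 1} := by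
  ext t
  simp only [mem_iUnion, unitsShell, mem_ofPred_eq]
  constructor
  · rintro ⟨n, hn⟩
    rw [hn]
    exact zpow_le_one_of_nonpos₀ (by exact_mod_cast (Fact.out : p.Prime).one_le) (by omega)
  · intro h
    refine ⟨(t : ℚ_[p]).valuation.toNat, ?_⟩
    rw [norm_eq_zpow_neg_valuation t.ne_zero,
      Int.toNat_of_nonneg ((norm_le_one_iff_val_nonneg _).1 h)]

theorem norm_units_mk0_pow (hp : (p : ℚ_[p]) ≠ 0) (n : ℕ) :
    ‖((Units.mk0 (p : ℚ_[p]) hp ^ n : ℚ_[p]ˣ) : ℚ_[p])‖ = (p : ℝ) ^ (-(n : ℤ)) := by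
  rw [Units.val_pow_eq_pow_val, Units.val_mk0, norm_pow, norm_p, zpow_neg, zpow_natCast, inv_pow]

theorem preimage_mul_unitsShell (hp : (p : ℚ_[p]) ≠ 0) (n : ℕ) :
    (Units.mk0 (p : ℚ_[p]) hp ^ n * ·) ⁻¹' unitsShell p n = unitsShell p 0 := by
  ext t
  simp only [unitsShell, Set.mem_preimage, Set.mem_ofPred_eq, Units.val_mul, norm_mul,
    norm_units_mk0_pow, Nat.cast_zero, neg_zero, zpow_zero]
  exact mul_eq_left₀ (natCast_zpow_neg_ne_zero n)

theorem measureReal_unitsShell [MeasurableSpace ℚ_[p]ˣ] [BorelSpace ℚ_[p]ˣ]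
    (μ : Measure ℚ_[p]ˣ) [μ.IsMulLeftInvariant] (n : ℕ) :
    μ.real (unitsShell p n) = μ.real (unitsShell p 0) := by
  have hp : (p : ℚ_[p]) ≠ 0 := Nat.cast_ne_zero.2 (Fact.out : p.Prime).ne_zero
  rw [measureReal_def, ← measure_preimage_mul μ (Units.mk0 _ hp ^ n), preimage_mul_unitsShell,
    measureReal_def]

theorem eq_pow_of_mem_unitsShell {M : Type*} [Monoid M] {ρ : ℚ_[p]ˣ → M}
    (hρ_mul : ∀ x y, ρ (x * y) = ρ x * ρ y) (hρ_unram : ∀ u : ℚ_[p]ˣ, ‖(u : ℚ_[p])‖ = 1 → ρ u = 1)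
    (hp : (p : ℚ_[p]) ≠ 0) {n : ℕ} {t : ℚ_[p]ˣ} (ht : t ∈ unitsShell p n) :
    ρ t = ρ (Units.mk0 (p : ℚ_[p]) hp) ^ n := by
  set P := Units.mk0 (p : ℚ_[p]) hp
  have hpow (m : ℕ) : ρ (P ^ m) = ρ P ^ m := by
    induction m with
    | zero => simpa using hρ_unram 1 (by simp)
    | succ m ih => rw [pow_succ, hρ_mul, ih, pow_succ]
  have hu : (P ^ n)⁻¹ * t ∈ unitsShell p 0 := by
    rwa [← preimage_mul_unitsShell hp n, Set.mem_preimage, mul_inv_cancel_left]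
  rw [unitsShell_zero] at hu
  calc ρ t = ρ (P ^ n * ((P ^ n)⁻¹ * t)) := by rw [mul_inv_cancel_left]
    _ = ρ P ^ n := by rw [hρ_mul, hpow, hρ_unram _ hu, mul_one]

end Padic

open Padic

theorem zeta_integral_spherical_general (p : ℕ) [Fact p.Prime]
    [MeasurableSpace ℚ_[p]ˣ] [BorelSpace ℚ_[p]ˣ]
    (μ : Measure ℚ_[p]ˣ) [μ.IsHaarMeasure]
    (hp : (p : ℚ_[p]) ≠ 0)
    -- ρ : an unramified character of ℚ_p^×
    (ρ : ℚ_[p]ˣ → ℂ)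
    (hρ_mul : ∀ x y : ℚ_[p]ˣ, ρ (x * y) = ρ x * ρ y)
    (hρ_unram : ∀ u : ℚ_[p]ˣ, ‖(u : ℚ_[p])‖ = 1 → ρ u = 1)
    -- ξ : Satake parameter, with convergence conditions
    (ξ : ℂ) (hξ : ξ ≠ 0)
    (hconv₁ : ‖ρ (Units.mk0 (p : ℚ_[p]) hp) * ξ * ((Real.sqrt p : ℂ))⁻¹‖ < 1)
    (hconv₂ : ‖ρ (Units.mk0 (p : ℚ_[p]) hp) * ξ⁻¹ * ((Real.sqrt p : ℂ))⁻¹‖ < 1)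
    -- φ⁰ : the spherical Kirillov function
    (φ₀ : ℚ_[p]ˣ → ℂ)
    (hφ₀_supp : ∀ y : ℚ_[p]ˣ, ¬ ‖(y : ℚ_[p])‖ ≤ 1 → φ₀ y = 0)
    (hφ₀_val : ∀ (y : ℚ_[p]ˣ) (n : ℕ), ‖(y : ℚ_[p])‖ = (p : ℝ) ^ (-(n : ℤ)) →
      φ₀ y = ((Real.sqrt p : ℂ))⁻¹ ^ n * ∑ k ∈ Finset.range (n + 1), ξ ^ (2 * (k : ℤ) - n)) :
    Integrable (fun t : ℚ_[p]ˣ => ρ t * φ₀ t) μ ∧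
    ((μ {t : ℚ_[p]ˣ | ‖(t : ℚ_[p])‖ = 1}).toReal : ℂ)⁻¹ *
        ∫ t : ℚ_[p]ˣ, ρ t * φ₀ t ∂μ =
      (1 - ρ (Units.mk0 (p : ℚ_[p]) hp) * ξ * ((Real.sqrt p : ℂ))⁻¹)⁻¹ *
        (1 - ρ (Units.mk0 (p : ℚ_[p]) hp) * ξ⁻¹ * ((Real.sqrt p : ℂ))⁻¹)⁻¹ := by
  set x := ρ (Units.mk0 (p : ℚ_[p]) hp) * ξ * ((Real.sqrt p : ℂ))⁻¹ with hx
  set y := ρ (Units.mk0 (p : ℚ_[p]) hp) * ξ⁻¹ * ((Real.sqrt p : ℂ))⁻¹ with hy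
  set a : ℕ → ℂ := fun n ↦ ∑ k ∈ Finset.range (n + 1), x ^ k * y ^ (n - k)
  have h_shell (n : ℕ) : EqOn (fun t ↦ ρ t * φ₀ t) (fun _ ↦ a n) (unitsShell p n) := by
    intro t ht
    change ρ t * φ₀ t = ∑ k ∈ Finset.range (n + 1), x ^ k * y ^ (n - k)
    rw [hx, hy, mul_right_comm _ ξ, mul_right_comm _ ξ⁻¹, sum_range_mul_pow_mul_inv_pow _ hξ,
      hφ₀_val t n ht, eq_pow_of_mem_unitsShell hρ_mul hρ_unram hp ht, mul_pow, mul_assoc]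
  have h_zero (t) (ht : t ∉ ⋃ n, unitsShell p n) : ρ t * φ₀ t = 0 := by
    rw [iUnion_unitsShell] at ht
    rw [hφ₀_supp t ht, mul_zero]
  have h_meas (n : ℕ) : MeasurableSet (unitsShell p n) := (isOpen_unitsShell n).measurableSet
  have h_fin (n : ℕ) : μ (unitsShell p n) ≠ ⊤ := (isCompact_unitsShell n).measure_ne_top
  have h_sum : Summable fun n ↦ μ.real (unitsShell p n) * ‖a n‖ := by
    simpa only [measureReal_unitsShell] using (summable_norm_sum_mul_range_of_summable_norm
      (summable_norm_geometric_of_norm_lt_one hconv₁)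
      (summable_norm_geometric_of_norm_lt_one hconv₂)).mul_left (μ.real (unitsShell p 0))
  have h_pos : μ.real (unitsShell p 0) ≠ 0 := ENNReal.toReal_ne_zero.2
    ⟨(isOpen_unitsShell 0).measure_ne_zero μ ⟨1, by simp [unitsShell]⟩, h_fin 0⟩
  refine ⟨integrable_of_eqOn_iUnion h_meas h_fin h_shell h_zero h_sum, ?_⟩
  rw [← unitsShell_zero, integral_eq_tsum_of_eqOn_iUnion h_meas pairwise_disjoint_unitsShell
    h_fin h_shell h_zero h_sum]
  simp only [measureReal_unitsShell, Complex.real_smul, tsum_mul_left]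
  rw [← measureReal_def, ← mul_assoc, inv_mul_cancel₀ (Complex.ofReal_ne_zero.2 h_pos), one_mul,
    tsum_sum_range_pow_mul_pow hconv₁ hconv₂]

/-- The unramified local zeta integral of the spherical Whittaker (Kirillov) function `φ⁰` of an
unramified principal series `π(ξ, ξ⁻¹)` against an unramified character `ρ` converges and equals
the local `L`-factor `(1 − ρ(p)ξp^{−1/2})⁻¹ (1 − ρ(p)ξ⁻¹p^{−1/2})⁻¹`. -/
theorem zeta_integral_spherical (p : ℕ) [Fact p.Prime]
    [MeasurableSpace ℚ_[p]ˣ] [BorelSpace ℚ_[p]ˣ]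
    (μ : Measure ℚ_[p]ˣ) [μ.IsHaarMeasure]
    (hp : (p : ℚ_[p]) ≠ 0)
    -- ρ : an unramified character of ℚ_p^×
    (ρ : ℚ_[p]ˣ → ℂ) (hρ_cont : Continuous ρ)
    (hρ_mul : ∀ x y : ℚ_[p]ˣ, ρ (x * y) = ρ x * ρ y)
    (hρ_ne : ∀ x : ℚ_[p]ˣ, ρ x ≠ 0)
    (hρ_unram : ∀ u : ℚ_[p]ˣ, ‖(u : ℚ_[p])‖ = 1 → ρ u = 1)
    -- ξ : Satake parameter, with convergence conditions
    (ξ : ℂ) (hξ : ξ ≠ 0)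
    (hconv₁ : ‖ρ (Units.mk0 (p : ℚ_[p]) hp) * ξ * ((Real.sqrt p : ℂ))⁻¹‖ < 1)
    (hconv₂ : ‖ρ (Units.mk0 (p : ℚ_[p]) hp) * ξ⁻¹ * ((Real.sqrt p : ℂ))⁻¹‖ < 1)
    -- φ⁰ : the spherical Kirillov function
    (φ₀ : ℚ_[p]ˣ → ℂ)
    (hφ₀_supp : ∀ y : ℚ_[p]ˣ, ¬ ‖(y : ℚ_[p])‖ ≤ 1 → φ₀ y = 0)
    (hφ₀_val : ∀ (y : ℚ_[p]ˣ) (n : ℕ), ‖(y : ℚ_[p])‖ = (p : ℝ) ^ (-(n : ℤ)) →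
      φ₀ y = ((Real.sqrt p : ℂ))⁻¹ ^ n * ∑ k ∈ Finset.range (n + 1), ξ ^ (2 * (k : ℤ) - n)) :
    Integrable (fun t : ℚ_[p]ˣ => ρ t * φ₀ t) μ ∧
    ((μ {t : ℚ_[p]ˣ | ‖(t : ℚ_[p])‖ = 1}).toReal : ℂ)⁻¹ *
        ∫ t : ℚ_[p]ˣ, ρ t * φ₀ t ∂μ =
      (1 - ρ (Units.mk0 (p : ℚ_[p]) hp) * ξ * ((Real.sqrt p : ℂ))⁻¹)⁻¹ *
        (1 - ρ (Units.mk0 (p : ℚ_[p]) hp) * ξ⁻¹ * ((Real.sqrt p : ℂ))⁻¹)⁻¹ :=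
  zeta_integral_spherical_general p μ hp ρ hρ_mul hρ_unram ξ hξ hconv₁ hconv₂ φ₀ hφ₀_supp hφ₀_val
end

section
/- Assume c₁ is not a square in F. Then κ(i) = 2i·XY in 𝒫(2)_E, and κ(v₄) = −12·c₂·X²Y² in 𝒫(4)_E, where v₄ := j⊗j − c₁^{−1}·(ij)⊗(ij) − 2c₂c₁^{−1}·i⊗i. Consequently, for every t ∈ E^×, κ(i)(1, t/t̄)·(t/t̄)^{−1} = 2i, which lies in i·F, and κ(v₄)(1, t/t̄)·(t/t̄)^{−2} = −12c₂, which lies in F. -/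
open scoped TensorProduct Quaternion

noncomputable section

namespace PaperQuat

/-- The embedding `ι : B → M₂(E)`, `ι(e₁ + e₂j) = [[e₁, c₂e₂],[ē₂, ē₁]]`, written out on the
components of a quaternion, where `E = F(√c₁)` is realized as an extension of `F` with a chosen
square root `s` of `c₁`. -/
def iotaE (F : Type*) [Field F] (c₁ c₂ : F) (E : Type*) [Field E] [Algebra F E] (s : E)
    (b : ℍ[F, c₁, c₂]) : Matrix (Fin 2) (Fin 2) E :=
  !![algebraMap F E b.re + algebraMap F E b.imI * s,
     algebraMap F E c₂ * (algebraMap F E b.imJ + algebraMap F E b.imK * s);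
     algebraMap F E b.imJ - algebraMap F E b.imK * s,
     algebraMap F E b.re - algebraMap F E b.imI * s]

/-- The factor `tr(M·ι(b))` of the map `κ` of Lemma 2.4, for the explicit embedding
`ι : B → M₂(E)`. -/
def kappaFactor (F : Type*) [Field F] (c₁ c₂ : F) (E : Type*) [Field E] [Algebra F E] (s : E)
    (b : ℍ[F, c₁, c₂]) : MvPolynomial (Fin 2) E :=
  Matrix.trace (Mmat E * ((iotaE F c₁ c₂ E s b).map MvPolynomial.C))

end PaperQuat

open PaperQuat

namespace PaperQuat

open MvPolynomial

variable {F : Type*} [Field F] {c₁ c₂ : F} {E : Type*} [Field E] [Algebra F E] (s : E)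

/-- `M` is traceless, so the scalar part `b.re` drops out. -/
theorem kappaFactor_apply (b : ℍ[F, c₁, c₂]) :
    kappaFactor F c₁ c₂ E s b =
      C (2 * algebraMap F E b.imI * s) * (X 0 * X 1)
        + C (algebraMap F E b.imJ - algebraMap F E b.imK * s) * X 1 ^ 2
        - C (algebraMap F E c₂ * (algebraMap F E b.imJ + algebraMap F E b.imK * s)) * X 0 ^ 2 := by
  simp only [kappaFactor, Mmat, iotaE, Matrix.trace_fin_two, Matrix.mul_apply, Fin.sum_univ_two,
    Matrix.map_apply, Matrix.of_apply, Matrix.cons_val', Matrix.cons_val_zero, Matrix.cons_val_one,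
    Matrix.empty_val', Matrix.cons_val_fin_one, map_add, map_sub, map_mul, map_ofNat]
  ring

theorem kappaFactor_qI :
    kappaFactor F c₁ c₂ E s (qI F c₁ c₂) = C (2 * s) * (X 0 * X 1) := by
  simp [kappaFactor_apply, qI]

theorem kappaFactor_qJ :
    kappaFactor F c₁ c₂ E s (qJ F c₁ c₂) = X 1 ^ 2 - C (algebraMap F E c₂) * X 0 ^ 2 := by
  simp [kappaFactor_apply, qJ]

theorem kappaFactor_qK :
    kappaFactor F c₁ c₂ E s (qK F c₁ c₂) =
      -C s * (X 1 ^ 2 + C (algebraMap F E c₂) * X 0 ^ 2) := by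
  simp [kappaFactor_apply, qK]
  ring

theorem eval_one_C_mul_X_pow_mul_X_pow {u : E} (hu : u ≠ 0) (c : E) (n : ℕ) :
    eval ![1, u] (C c * (X 0 ^ n * X 1 ^ n)) * (u ^ n)⁻¹ = c := by
  simp [hu]

theorem kappaFactor_v4 (hc₁ : c₁ ≠ 0) (hs : s * s = algebraMap F E c₁) :
    kappaFactor F c₁ c₂ E s (qJ F c₁ c₂) ^ 2
        - C ((algebraMap F E c₁)⁻¹) * kappaFactor F c₁ c₂ E s (qK F c₁ c₂) ^ 2
        - C (2 * algebraMap F E c₂ * (algebraMap F E c₁)⁻¹) *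
            kappaFactor F c₁ c₂ E s (qI F c₁ c₂) ^ 2 =
      C (-(12 : E) * algebraMap F E c₂) * (X 0 ^ 2 * X 1 ^ 2) := by
  have hs_sq : C ((algebraMap F E c₁)⁻¹) * C s ^ 2 = (1 : MvPolynomial (Fin 2) E) := by
    rw [← map_pow, ← map_mul, sq, hs, inv_mul_cancel₀ ((map_ne_zero _).mpr hc₁), map_one]
  rw [kappaFactor_qI, kappaFactor_qJ, kappaFactor_qK]
  simp only [map_mul, map_neg, map_ofNat]
  -- `c₁⁻¹κ(k)² = (Y² + c₂X²)²`, and `κ(j)²` minus that is `-4c₂X²Y²`; `κ(i)²` adds `-8c₂X²Y²`.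
  linear_combination (-(X 1 ^ 2 + C (algebraMap F E c₂) * X 0 ^ 2) ^ 2
    - 8 * C (algebraMap F E c₂) * (X 0 * X 1) ^ 2) * hs_sq

end PaperQuat

theorem kappa_invariant_vectors_eval_general
    (F : Type*) [Field F] (c₁ c₂ : F) (hc₁ : c₁ ≠ 0)
    (E : Type*) [Field E] [Algebra F E] (s : E) (hs : s * s = algebraMap F E c₁) :
    -- κ(i) = 2i·XY in 𝒫(2)_E
    (kappaFactor F c₁ c₂ E s (qI F c₁ c₂) =
      MvPolynomial.C (2 * s) * (MvPolynomial.X 0 * MvPolynomial.X 1)) ∧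
    -- κ(v₄) = −12·c₂·X²Y² in 𝒫(4)_E
    (kappaFactor F c₁ c₂ E s (qJ F c₁ c₂) ^ 2
        - MvPolynomial.C ((algebraMap F E c₁)⁻¹) * kappaFactor F c₁ c₂ E s (qK F c₁ c₂) ^ 2
        - MvPolynomial.C (2 * algebraMap F E c₂ * (algebraMap F E c₁)⁻¹) *
            kappaFactor F c₁ c₂ E s (qI F c₁ c₂) ^ 2 =
      MvPolynomial.C (-(12 : E) * algebraMap F E c₂) *
        (MvPolynomial.X 0 ^ 2 * MvPolynomial.X 1 ^ 2)) ∧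
    -- for every t = x + y·s ∈ E^×, κ(i)(1, t/t̄)·(t/t̄)⁻¹ = 2i
    (∀ x y : F,
      algebraMap F E x + algebraMap F E y * s ≠ 0 →
      algebraMap F E x - algebraMap F E y * s ≠ 0 →
      MvPolynomial.eval
          ![1, (algebraMap F E x + algebraMap F E y * s) /
              (algebraMap F E x - algebraMap F E y * s)]
          (kappaFactor F c₁ c₂ E s (qI F c₁ c₂)) *
        ((algebraMap F E x + algebraMap F E y * s) /
            (algebraMap F E x - algebraMap F E y * s))⁻¹ = 2 * s) ∧
    -- for every t = x + y·s ∈ E^×, κ(v₄)(1, t/t̄)·(t/t̄)⁻² = −12c₂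
    (∀ x y : F,
      algebraMap F E x + algebraMap F E y * s ≠ 0 →
      algebraMap F E x - algebraMap F E y * s ≠ 0 →
      MvPolynomial.eval
          ![1, (algebraMap F E x + algebraMap F E y * s) /
              (algebraMap F E x - algebraMap F E y * s)]
          (kappaFactor F c₁ c₂ E s (qJ F c₁ c₂) ^ 2
            - MvPolynomial.C ((algebraMap F E c₁)⁻¹) *
                kappaFactor F c₁ c₂ E s (qK F c₁ c₂) ^ 2
            - MvPolynomial.C (2 * algebraMap F E c₂ * (algebraMap F E c₁)⁻¹) *
                kappaFactor F c₁ c₂ E s (qI F c₁ c₂) ^ 2) *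
        (((algebraMap F E x + algebraMap F E y * s) /
            (algebraMap F E x - algebraMap F E y * s)) ^ 2)⁻¹ =
      -(12 : E) * algebraMap F E c₂) ∧
    -- the values lie in `i·F` and in `F` respectively
    ((∃ a : F, (2 : E) * s = s * algebraMap F E a) ∧
      (∃ b : F, -(12 : E) * algebraMap F E c₂ = algebraMap F E b)) := by
  refine ⟨kappaFactor_qI s, kappaFactor_v4 s hc₁ hs, fun x y ht ht' => ?_, fun x y ht ht' => ?_,
    ⟨2, by rw [map_ofNat, mul_comm]⟩, ⟨-12 * c₂, by rw [map_mul, map_neg, map_ofNat]⟩⟩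
  · rw [kappaFactor_qI]
    simpa using eval_one_C_mul_X_pow_mul_X_pow (div_ne_zero ht ht') (2 * s) 1
  · rw [kappaFactor_v4 s hc₁ hs]
    exact eval_one_C_mul_X_pow_mul_X_pow (div_ne_zero ht ht') _ 2

/-- The explicit evaluations in the proof of Lemma 2.5: `κ(i) = 2i·XY`,
`κ(v₄) = −12c₂·X²Y²`, and the corresponding values of the associated functions on `E^×`,
which are the constants `2i ∈ i·F` and `−12c₂ ∈ F` respectively. -/
theorem kappa_invariant_vectors_eval
    (F : Type*) [Field F] [NumberField F] (c₁ c₂ : F) (hc₁ : c₁ ≠ 0) (hc₂ : c₂ ≠ 0)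
    (hnotsq : ∀ a : F, a * a ≠ c₁)
    (E : Type*) [Field E] [Algebra F E] (s : E) (hs : s * s = algebraMap F E c₁) :
    -- κ(i) = 2i·XY in 𝒫(2)_E
    (kappaFactor F c₁ c₂ E s (qI F c₁ c₂) =
      MvPolynomial.C (2 * s) * (MvPolynomial.X 0 * MvPolynomial.X 1)) ∧
    -- κ(v₄) = −12·c₂·X²Y² in 𝒫(4)_E
    (kappaFactor F c₁ c₂ E s (qJ F c₁ c₂) ^ 2
        - MvPolynomial.C ((algebraMap F E c₁)⁻¹) * kappaFactor F c₁ c₂ E s (qK F c₁ c₂) ^ 2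
        - MvPolynomial.C (2 * algebraMap F E c₂ * (algebraMap F E c₁)⁻¹) *
            kappaFactor F c₁ c₂ E s (qI F c₁ c₂) ^ 2 =
      MvPolynomial.C (-(12 : E) * algebraMap F E c₂) *
        (MvPolynomial.X 0 ^ 2 * MvPolynomial.X 1 ^ 2)) ∧
    -- for every t = x + y·s ∈ E^×, κ(i)(1, t/t̄)·(t/t̄)⁻¹ = 2i
    (∀ x y : F,
      algebraMap F E x + algebraMap F E y * s ≠ 0 →
      algebraMap F E x - algebraMap F E y * s ≠ 0 →
      MvPolynomial.eval
          ![1, (algebraMap F E x + algebraMap F E y * s) /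
              (algebraMap F E x - algebraMap F E y * s)]
          (kappaFactor F c₁ c₂ E s (qI F c₁ c₂)) *
        ((algebraMap F E x + algebraMap F E y * s) /
            (algebraMap F E x - algebraMap F E y * s))⁻¹ = 2 * s) ∧
    -- for every t = x + y·s ∈ E^×, κ(v₄)(1, t/t̄)·(t/t̄)⁻² = −12c₂
    (∀ x y : F,
      algebraMap F E x + algebraMap F E y * s ≠ 0 →
      algebraMap F E x - algebraMap F E y * s ≠ 0 →
      MvPolynomial.eval
          ![1, (algebraMap F E x + algebraMap F E y * s) /
              (algebraMap F E x - algebraMap F E y * s)]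
          (kappaFactor F c₁ c₂ E s (qJ F c₁ c₂) ^ 2
            - MvPolynomial.C ((algebraMap F E c₁)⁻¹) *
                kappaFactor F c₁ c₂ E s (qK F c₁ c₂) ^ 2
            - MvPolynomial.C (2 * algebraMap F E c₂ * (algebraMap F E c₁)⁻¹) *
                kappaFactor F c₁ c₂ E s (qI F c₁ c₂) ^ 2) *
        (((algebraMap F E x + algebraMap F E y * s) /
            (algebraMap F E x - algebraMap F E y * s)) ^ 2)⁻¹ =
      -(12 : E) * algebraMap F E c₂) ∧
    -- the values lie in `i·F` and in `F` respectively
    ((∃ a : F, (2 : E) * s = s * algebraMap F E a) ∧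
      (∃ b : F, -(12 : E) * algebraMap F E c₂ = algebraMap F E b)) :=
  kappa_invariant_vectors_eval_general F c₁ c₂ hc₁ E s hs
end
end
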